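/- For every convex body K ⊆ ℝ^n, one has width(K) ≤ (n+1)·inrad(K). -/

import Mathlib

open RealInnerProductSpace Pointwise

/-- A convex body in `ℝ^n`: a compact convex set with nonempty interior. -/
def IsConvexBody {m : ℕ} (K : Set (EuclideanSpace ℝ (Fin m))) : Prop :=
  IsCompact K ∧ Convex ℝ K ∧ (interior K).Nonempty

/-- The support function of a set `S ⊆ ℝ^m`. -/
noncomputable def suppFn {m : ℕ} (S : Set (EuclideanSpace ℝ (Fin m)))
    (u : EuclideanSpace ℝ (Fin m)) : ℝ :=
  sSup ((fun x => ⟪x, u⟫) '' S)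

/-- The minimal width of a set `S ⊆ ℝ^m`. -/
noncomputable def minWidth {m : ℕ} (S : Set (EuclideanSpace ℝ (Fin m))) : ℝ :=
  ⨅ u : {u : EuclideanSpace ℝ (Fin m) // ‖u‖ = 1},
    (suppFn S u + suppFn S (-(u : EuclideanSpace ℝ (Fin m))))

/-- The inradius: the supremum of radii of Euclidean balls contained in the set. -/
noncomputable def inrad {m : ℕ} (L : Set (EuclideanSpace ℝ (Fin m))) : ℝ :=
  sSup {r : ℝ | ∃ c, Metric.closedBall c r ⊆ L}

/-!
By Helly's theorem, a convex body `K ⊆ ℝ^n` contains a homothetic copy `c + (K - K) / (n + 1)`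
of its difference body: for `x, y ∈ K` the convex sets `{c | c + (x - y) / (n + 1) ∈ K}` meet
`n + 1` at a time. Indeed, for pairs `(xᵢ, yᵢ)`, `i = 1, …, m ≤ n + 1`, and any `z ∈ K`, the point
`c = (∑ yᵢ + (n + 1 - m) z) / (n + 1)` works, since `c + (xⱼ - yⱼ) / (n + 1)` is a convex
combination of `xⱼ`, the `yᵢ` with `i ≠ j`, and `z`. The difference body contains the ball of
radius `width(K)` about the origin: separate a point outside it from `K - K` and read off the
width in the normal direction. Hence `K` contains a ball of radius `width(K) / (n + 1)`.
-/

open Metric Set Finset Module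

section Helly

variable {E : Type*} [AddCommGroup E] [Module ℝ E] {K : Set E}

theorem Convex.smul_sum_add_smul_mem (hK : Convex ℝ K) {ι : Type*} {I : Finset ι}
    {a : ι → E} (ha : ∀ i ∈ I, a i ∈ K) {z : E} (hz : z ∈ K) {s : ℝ} (hs : 0 ≤ s)
    (hIs : #I * s ≤ 1) : s • ∑ i ∈ I, a i + (1 - #I * s) • z ∈ K := by
  rcases I.eq_empty_or_nonempty with rfl | hI
  · simpa using hz
  have hcard : (#I : ℝ) ≠ 0 := by exact_mod_cast hI.card_pos.ne'
  have hcentroid : ∑ i ∈ I, (#I : ℝ)⁻¹ • a i ∈ K :=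
    hK.sum_mem (fun _ _ => by positivity) (by simp [hcard]) ha
  convert hK hcentroid hz (show 0 ≤ (#I : ℝ) * s by positivity)
    (show 0 ≤ 1 - (#I : ℝ) * s by linarith) (add_sub_cancel _ 1) using 2
  rw [← Finset.smul_sum, smul_smul]
  field_simp

theorem Convex.exists_forall_add_smul_sub_mem (hK : Convex ℝ K) (hne : K.Nonempty)
    {ι : Type*} (I : Finset ι) {x y : ι → E} (hx : ∀ i ∈ I, x i ∈ K) (hy : ∀ i ∈ I, y i ∈ K)
    {s : ℝ} (hs : 0 ≤ s) (hIs : #I * s ≤ 1) : ∃ c, ∀ i ∈ I, c + s • (x i - y i) ∈ K := by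
  classical
  obtain ⟨z, hz⟩ := hne
  refine ⟨s • ∑ i ∈ I, y i + (1 - #I * s) • z, fun p hp => ?_⟩
  have hmem := hK.smul_sum_add_smul_mem (a := Function.update y p (x p))
    (fun i hi => by rcases eq_or_ne i p with rfl | h <;> simp [*]) hz hs hIs
  rw [Finset.sum_update_of_mem hp] at hmem
  rw [Finset.sum_eq_add_sum_sdiff_singleton_of_mem hp]
  convert hmem using 1
  module

variable [TopologicalSpace E] [ContinuousAdd E] [T2Space E] [FiniteDimensional ℝ E]

theorem Convex.exists_vadd_smul_sub_subset (hK : Convex ℝ K) (hKc : IsCompact K)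
    (hne : K.Nonempty) : ∃ c : E, c +ᵥ (finrank ℝ E + 1 : ℝ)⁻¹ • (K - K) ⊆ K := by
  set s : ℝ := (finrank ℝ E + 1 : ℝ)⁻¹
  obtain ⟨c, hc⟩ := Convex.helly_theorem_compact' (𝕜 := ℝ)
    (F := fun p : K × K => (· + s • ((p.1 : E) - p.2)) ⁻¹' K)
    (fun _ => hK.translate_preimage_left _)
    (fun _ => (Homeomorph.addRight _).isCompact_preimage.2 hKc)
    (fun I hI => by
      obtain ⟨c, hc⟩ := hK.exists_forall_add_smul_sub_mem hne I (s := s) (fun p _ => p.1.2)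
        (fun p _ => p.2.2) (by positivity)
        (by rw [← div_eq_mul_inv, div_le_one (by positivity)]; exact_mod_cast hI)
      exact ⟨c, mem_iInter₂.2 hc⟩)
  refine ⟨c, ?_⟩
  rintro _ ⟨_, ⟨_, ⟨x, hx, y, hy, rfl⟩, rfl⟩, rfl⟩
  exact mem_iInter.1 hc (⟨x, hx⟩, ⟨y, hy⟩)

end Helly

theorem Convex.exists_norm_eq_one_forall_inner_lt {E : Type*} [NormedAddCommGroup E]
    [InnerProductSpace ℝ E] [CompleteSpace E] {K : Set E} (hK : Convex ℝ K) (hKc : IsClosed K)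
    (hne : K.Nonempty) {z : E} (hz : z ∉ K) : ∃ u : E, ‖u‖ = 1 ∧ ∀ a ∈ K, ⟪a, u⟫ < ⟪z, u⟫ := by
  obtain ⟨f, t, hKf, hfz⟩ := geometric_hahn_banach_closed_point hK hKc hz
  set v := (InnerProductSpace.toDual ℝ E).symm f
  have hfv (x : E) : f x = ⟪x, v⟫ := by rw [real_inner_comm, InnerProductSpace.toDual_symm_apply]
  have hv : v ≠ 0 := by
    rintro hv
    obtain ⟨a, ha⟩ := hne
    have := hKf a ha
    simp only [hfv, hv, inner_zero_right] at this hfz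
    linarith
  refine ⟨‖v‖⁻¹ • v, by simp [norm_smul, hv], fun a ha => ?_⟩
  simp only [real_inner_smul_right]
  gcongr
  rw [← hfv, ← hfv]
  exact (hKf a ha).trans hfz

section EuclideanSpace

variable {m : ℕ} {K : Set (EuclideanSpace ℝ (Fin m))}

theorem IsCompact.le_suppFn (hK : IsCompact K) (u : EuclideanSpace ℝ (Fin m)) {x}
    (hx : x ∈ K) : ⟪x, u⟫ ≤ suppFn K u :=
  le_csSup (hK.image (continuous_id.inner continuous_const)).bddAbove ⟨x, hx, rfl⟩

theorem IsCompact.exists_inner_eq_suppFn (hK : IsCompact K) (hne : K.Nonempty)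
    (u : EuclideanSpace ℝ (Fin m)) : ∃ x ∈ K, ⟪x, u⟫ = suppFn K u :=
  (hK.image (continuous_id.inner continuous_const)).sSup_mem (hne.image _)

theorem IsCompact.suppFn_add_suppFn_neg_nonneg (hK : IsCompact K) (hne : K.Nonempty)
    (u : EuclideanSpace ℝ (Fin m)) : 0 ≤ suppFn K u + suppFn K (-u) := by
  obtain ⟨x, hx⟩ := hne
  have h₁ := hK.le_suppFn u hx
  have h₂ := hK.le_suppFn (-u) hx
  rw [inner_neg_right] at h₂
  linarith

theorem IsCompact.minWidth_nonneg (hK : IsCompact K) (hne : K.Nonempty) : 0 ≤ minWidth K :=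
  Real.iInf_nonneg fun u => hK.suppFn_add_suppFn_neg_nonneg hne u

theorem IsCompact.minWidth_le (hK : IsCompact K) (hne : K.Nonempty)
    {u : EuclideanSpace ℝ (Fin m)} (hu : ‖u‖ = 1) : minWidth K ≤ suppFn K u + suppFn K (-u) :=
  ciInf_le (f := fun v : {v : EuclideanSpace ℝ (Fin m) // ‖v‖ = 1} =>
      suppFn K v + suppFn K (-(v : EuclideanSpace ℝ (Fin m))))
    ⟨0, forall_mem_range.2 fun v => hK.suppFn_add_suppFn_neg_nonneg hne v⟩ ⟨u, hu⟩

theorem minWidth_eq_zero_of_subsingleton [Subsingleton (EuclideanSpace ℝ (Fin m))] :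
    minWidth K = 0 := by
  have : IsEmpty {u : EuclideanSpace ℝ (Fin m) // ‖u‖ = 1} :=
    ⟨fun ⟨u, hu⟩ => by simp [Subsingleton.elim u 0] at hu⟩
  rw [minWidth, iInf_of_isEmpty, Real.sInf_empty]

theorem Convex.closedBall_minWidth_subset_sub (hK : Convex ℝ K) (hKc : IsCompact K)
    (hne : K.Nonempty) : closedBall 0 (minWidth K) ⊆ K - K := by
  intro z hz
  by_contra hzK
  obtain ⟨u, hu, hsep⟩ := (hK.sub hK).exists_norm_eq_one_forall_inner_lt
    (sub_eq_add_neg K K ▸ hKc.add hKc.neg).isClosed (hne.sub hne) hzK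
  obtain ⟨x, hx, hxu⟩ := hKc.exists_inner_eq_suppFn hne u
  obtain ⟨y, hy, hyu⟩ := hKc.exists_inner_eq_suppFn hne (-u)
  have hxy := hsep (x - y) (sub_mem_sub hx hy)
  have hz' : ⟪z, u⟫ ≤ minWidth K := by
    calc ⟪z, u⟫ ≤ ‖z‖ * ‖u‖ := real_inner_le_norm z u
      _ ≤ minWidth K := by simpa [hu] using hz
  have hw := hKc.minWidth_le hne hu
  rw [inner_sub_left] at hxy
  rw [inner_neg_right] at hyu
  linarith

theorem inrad_nonneg (hne : K.Nonempty) : 0 ≤ inrad K := by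
  obtain ⟨c, hc⟩ := hne
  exact Real.sSup_nonneg' ⟨0, ⟨c, by simpa using hc⟩, le_rfl⟩

theorem le_inrad [Nontrivial (EuclideanSpace ℝ (Fin m))] (hK : Bornology.IsBounded K)
    {c : EuclideanSpace ℝ (Fin m)} {r : ℝ} (hr : closedBall c r ⊆ K) : r ≤ inrad K := by
  refine le_csSup ⟨diam K / 2, ?_⟩ ⟨c, hr⟩
  rintro r' ⟨c', hr'⟩
  rcases lt_or_ge r' 0 with h | h
  · linarith [diam_nonneg (s := K)]
  · linarith [diam_closedBall_eq c' h, diam_mono hr' hK]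

end EuclideanSpace

/-- Steinhagen's inequality: `width(K) ≤ (n+1)·inrad(K)` for a convex body `K ⊆ ℝ^n`. -/
theorem stmt6 {n : ℕ} (K : Set (EuclideanSpace ℝ (Fin n))) (hK : IsConvexBody K) :
    minWidth K ≤ (n + 1 : ℝ) * inrad K := by
  obtain ⟨hKc, hK, hint⟩ := hK
  have hne : K.Nonempty := hint.mono interior_subset
  rcases subsingleton_or_nontrivial (EuclideanSpace ℝ (Fin n)) with _ | _
  · rw [minWidth_eq_zero_of_subsingleton]
    exact mul_nonneg (by positivity) (inrad_nonneg hne)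
  obtain ⟨c, hc⟩ := hK.exists_vadd_smul_sub_subset hKc hne
  rw [finrank_euclideanSpace_fin] at hc
  have hball : closedBall c ((n + 1 : ℝ)⁻¹ * minWidth K) ⊆ K := by
    calc closedBall c ((n + 1 : ℝ)⁻¹ * minWidth K)
        = c +ᵥ (n + 1 : ℝ)⁻¹ • closedBall (0 : EuclideanSpace ℝ (Fin n)) (minWidth K) := by
          rw [smul_closedBall _ _ (hKc.minWidth_nonneg hne), smul_zero, vadd_closedBall_zero,
            Real.norm_of_nonneg (by positivity)]
      _ ⊆ c +ᵥ (n + 1 : ℝ)⁻¹ • (K - K) := by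
          gcongr
          exact hK.closedBall_minWidth_subset_sub hKc hne
      _ ⊆ K := hc
  have hr := le_inrad hKc.isBounded hball
  rwa [inv_mul_le_iff₀ (by positivity)] at hr
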